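/- arXiv:2307.16439 — 4 statements merged into one kernel-verified Lean document; each statement's English description precedes it below -/
import Mathlib

section
/- For every natural number n ≥ 1, there exist constants C, R₀ > 0 such that for all R ≥ R₀, |∫₀^π (1 − e^{−2Rθ/π})ⁿ · sin²θ dθ − π/2 + (π³/4)·(∑_{k=1}^n C(n,k)·(−1)^{k+1}/k³)·(1/R³)| ≤ C/R⁴. -/
/-!
With `c = 2R/π`, the binomial expansion of `(1 - e^{-cθ})ⁿ` writes the integral as
`π/2 + ∑_{k=1}^n (-1)^k C(n,k) J(kc)`, where `J(b) = ∫₀^π e^{-bθ} sin²θ dθ` has the closed form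
`2(1 - e^{-bπ}) / (b(b² + 4)) = 2/b³ + O(b⁻⁴)`. Since `2/(kc)³ = π³/(4k³R³)`, the leading terms
give the `R⁻³` coefficient and the remainders add up to at most `2ⁿ · 5/c⁴`.
-/
open Real Finset

lemma integral_exp_neg_mul_mul_sin_sq {b : ℝ} (hb : b ≠ 0) :
    ∫ θ in (0:ℝ)..π, exp (-(b * θ)) * sin θ ^ 2 = 2 * (1 - exp (-(b * π))) / (b * (b ^ 2 + 4)) := by
  have hb4 : b ^ 2 + 4 ≠ 0 := by positivity
  let F : ℝ → ℝ := fun θ =>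
    -exp (-(b * θ)) * (1 / (2 * b) + (2 * sin (2 * θ) - b * cos (2 * θ)) / (2 * (b ^ 2 + 4)))
  have hF : ∀ θ, HasDerivAt F (exp (-(b * θ)) * sin θ ^ 2) θ := by
    intro θ
    have hlin : ∀ c : ℝ, HasDerivAt (fun θ : ℝ => c * θ) c θ := fun c => by
      simpa using (hasDerivAt_id θ).const_mul c
    refine HasDerivAt.congr_deriv (f := F) (((hlin b).neg.exp.neg).mul
      ((((hlin 2).sin.const_mul 2).sub ((hlin 2).cos.const_mul b)).div_const (2 * (b ^ 2 + 4))
        |>.const_add (1 / (2 * b)))) ?_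
    simp only [Pi.neg_apply]
    rw [sin_two_mul, cos_two_mul', cos_sq']
    field_simp
    ring
  rw [intervalIntegral.integral_eq_sub_of_hasDerivAt (fun θ _ => hF θ)
    (by apply Continuous.intervalIntegrable; fun_prop)]
  simp only [F, mul_zero, neg_zero, exp_zero, sin_zero, cos_zero, sin_two_pi, cos_two_pi]
  field_simp
  ring

lemma abs_integral_exp_neg_mul_mul_sin_sq_sub_le {b : ℝ} (hb : 2 ≤ b) :
    |(∫ θ in (0:ℝ)..π, exp (-(b * θ)) * sin θ ^ 2) - 2 / b ^ 3| ≤ 5 / b ^ 4 := by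
  have hb0 : 0 < b := by linarith
  rw [integral_exp_neg_mul_mul_sin_sq hb0.ne']
  set e := exp (-(b * π))
  have he : 0 < e := exp_pos _
  -- `e * b ≤ 1 / 3` since `exp (b * π) ≥ 1 + b * π > 3 b`
  have heb : e * b ≤ 1 / 3 := by
    have h1 : b * π + 1 ≤ exp (b * π) := add_one_le_exp _
    have h2 : e * exp (b * π) = 1 := by rw [← exp_add, neg_add_cancel, exp_zero]
    nlinarith [pi_gt_three, mul_pos he hb0]
  have hdiff : 2 * (1 - e) / (b * (b ^ 2 + 4)) - 2 / b ^ 3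
      = -((8 + 2 * e * b ^ 2) / (b ^ 3 * (b ^ 2 + 4))) := by
    field_simp
    ring
  rw [hdiff, abs_neg, abs_of_nonneg (by positivity), div_le_div_iff₀ (by positivity) (by positivity)]
  nlinarith [mul_le_mul_of_nonneg_right heb (pow_nonneg hb0.le 5),
    mul_nonneg (sub_nonneg.2 hb) (pow_nonneg hb0.le 4), pow_nonneg hb0.le 3]

lemma one_sub_exp_neg_pow (x : ℝ) (n : ℕ) :
    (1 - exp (-x)) ^ n = ∑ k ∈ range (n + 1), (-1) ^ k * n.choose k * exp (-(k * x)) := by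
  rw [sub_eq_neg_add, add_pow]
  refine sum_congr rfl fun k _ => ?_
  rw [neg_pow, ← exp_nat_mul, one_pow, mul_one, mul_neg]
  ring

lemma integral_one_sub_exp_neg_mul_pow_mul_sin_sq (c : ℝ) (n : ℕ) :
    ∫ θ in (0:ℝ)..π, (1 - exp (-(c * θ))) ^ n * sin θ ^ 2
      = π / 2 + ∑ k ∈ Icc 1 n,
          (-1) ^ k * n.choose k * ∫ θ in (0:ℝ)..π, exp (-(k * c * θ)) * sin θ ^ 2 := by
  simp_rw [one_sub_exp_neg_pow, sum_mul, mul_assoc]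
  rw [intervalIntegral.integral_finsetSum
    (fun k _ => by apply Continuous.intervalIntegrable; fun_prop)]
  simp_rw [intervalIntegral.integral_const_mul]
  rw [range_eq_Ico, sum_eq_sum_Ico_succ_bot n.succ_pos, zero_add, Nat.succ_eq_add_one,
    Ico_add_one_right_eq_Icc]
  congr 1
  simp [integral_sin_sq]

lemma abs_sum_neg_one_pow_mul_choose_mul_le {n : ℕ} {y : ℕ → ℝ} {M : ℝ}
    (hy : ∀ k ∈ Icc 1 n, |y k| ≤ M) (hM : 0 ≤ M) :
    |∑ k ∈ Icc 1 n, (-1) ^ k * n.choose k * y k| ≤ 2 ^ n * M := by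
  have hchoose : ∑ k ∈ Icc 1 n, (n.choose k : ℝ) ≤ 2 ^ n := by
    have : ∑ k ∈ Icc 1 n, n.choose k ≤ 2 ^ n := Nat.sum_range_choose n ▸
      sum_le_sum_of_subset fun k hk => by simp at hk ⊢; omega
    exact_mod_cast this
  calc |∑ k ∈ Icc 1 n, (-1) ^ k * n.choose k * y k|
      ≤ ∑ k ∈ Icc 1 n, n.choose k * M := by
        refine (abs_sum_le_sum_abs _ _).trans (sum_le_sum fun k hk => ?_)
        rw [abs_mul, abs_mul, abs_pow, abs_neg, abs_one, one_pow, one_mul, Nat.abs_cast]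
        exact mul_le_mul_of_nonneg_left (hy k hk) (Nat.cast_nonneg _)
    _ ≤ 2 ^ n * M := by rw [← sum_mul]; exact mul_le_mul_of_nonneg_right hchoose hM

theorem integral_weight_sin_sq_asymp_general (n : ℕ) :
    ∃ C R₀ : ℝ, 0 < C ∧ 0 < R₀ ∧ ∀ R : ℝ, R₀ ≤ R →
      |(∫ θ in (0:ℝ)..π, (1 - Real.exp (-2 * R * θ / π)) ^ n * Real.sin θ ^ 2)
          - π / 2
          + (π ^ 3 / 4) *
            (∑ k ∈ Finset.Icc 1 n, (n.choose k : ℝ) * (-1) ^ (k + 1) / (k : ℝ) ^ 3)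
            * (1 / R ^ 3)|
        ≤ C / R ^ 4 := by
  refine ⟨2 ^ n * 5 * π ^ 4 / 16, π, by positivity, pi_pos, fun R hR => ?_⟩
  set c := 2 * R / π
  have hc : 2 ≤ c := by rw [le_div_iff₀ pi_pos]; linarith
  let y : ℕ → ℝ := fun k => (∫ θ in (0:ℝ)..π, exp (-(k * c * θ)) * sin θ ^ 2) - 2 / (k * c) ^ 3
  have hexpansion : (∫ θ in (0:ℝ)..π, (1 - Real.exp (-2 * R * θ / π)) ^ n * Real.sin θ ^ 2)
      - π / 2 + (π ^ 3 / 4) * (∑ k ∈ Icc 1 n, (n.choose k : ℝ) * (-1) ^ (k + 1) / (k : ℝ) ^ 3)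
        * (1 / R ^ 3) = ∑ k ∈ Icc 1 n, (-1) ^ k * n.choose k * y k := by
    have hθ : ∀ θ, -2 * R * θ / π = -(c * θ) := fun θ => by ring
    simp_rw [hθ, integral_one_sub_exp_neg_mul_pow_mul_sin_sq, mul_sum, sum_mul, add_sub_cancel_left,
      ← sum_add_distrib, y]
    refine sum_congr rfl fun k hk => ?_
    have hk0 : (k : ℝ) ≠ 0 := by have := (mem_Icc.1 hk).1; positivity
    simp only [c]
    field_simp
    ring
  have hy : ∀ k ∈ Icc 1 n, |y k| ≤ 5 / c ^ 4 := fun k hk => by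
    have hk1 : (1 : ℝ) ≤ k := by exact_mod_cast (mem_Icc.1 hk).1
    refine (abs_integral_exp_neg_mul_mul_sin_sq_sub_le (by nlinarith)).trans ?_
    gcongr
    nlinarith
  rw [hexpansion]
  refine (abs_sum_neg_one_pow_mul_choose_mul_le hy (by positivity)).trans_eq ?_
  simp only [c]
  field_simp
  ring

/-- Two-term asymptotic of `G(R) = ∫₀^π (1 - e^{-2Rθ/π})ⁿ sin²θ dθ` as `R → +∞`:
`G(R) = π/2 - (π³/4) (∑_{k=1}^n C(n,k) (-1)^{k+1}/k³) R⁻³ + O(R⁻⁴)`. -/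
theorem integral_weight_sin_sq_asymp (n : ℕ) (hn : 1 ≤ n) :
    ∃ C R₀ : ℝ, 0 < C ∧ 0 < R₀ ∧ ∀ R : ℝ, R₀ ≤ R →
      |(∫ θ in (0:ℝ)..π, (1 - Real.exp (-2 * R * θ / π)) ^ n * Real.sin θ ^ 2)
          - π / 2
          + (π ^ 3 / 4) *
            (∑ k ∈ Finset.Icc 1 n, (n.choose k : ℝ) * (-1) ^ (k + 1) / (k : ℝ) ^ 3)
            * (1 / R ^ 3)|
        ≤ C / R ^ 4 :=
  integral_weight_sin_sq_asymp_general n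
end

section
/- Let n ≥ 1 be a natural number. In hyperbolic space H^{n+1} with metric dt² + sinh²t·g_{S^n} (polar coordinates around a point p), the Rayleigh quotient of the radial test function f(t) = e^{−nt/2}·sin(πt/R) on the geodesic ball B(p,R) satisfies ∫_{B(p,R)} |∇f|² / ∫_{B(p,R)} f² ≤ n²/4 + π²/R² + O(R⁻³) as R → +∞. Consequently λ₁(B(p,R)) ≤ n²/4 + π²/R² + O(R⁻³). -/
/-!
Write `w(t) = (1 - e^{-2t})ⁿ`, so `0 ≤ w ≤ 1` and, by Bernoulli, `1 - w ≤ n e^{-2t}`. Compared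
with `∫₀^R sin² = ∫₀^R cos² = R/2` and `∫₀^R sin · cos = 0` (arguments `πt/R`), the weight costs
only `O(1)`: the denominator `D` is at least `(R - n)/2`, the `cos²` term is at most `R/2`, and the
cross term at most `nπ/(4R)`, because `sin(πt/R) ≤ πt/R` and `∫₀^∞ t e^{-2t} dt = 1/4`. Expanding
the square in the numerator bounds the quotient by
`n²/4 + (π²/(2R) + n²π²/(4R²))/D = n²/4 + π²/R² + O(R⁻³)`.
-/

open Real

/-- The Rayleigh quotient of `f(t) = e^{-nt/2} sin(πt/R)` on the geodesic ball `B(p,R)` in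
hyperbolic space `H^{n+1}` (metric `dt² + sinh²t g_S`): after factoring out the volume of the
unit sphere and `e^{-nt}`-normalizing, it equals
`(∫₀^R (1-e^{-2t})ⁿ (-(n/2) sin(πt/R) + (π/R) cos(πt/R))² dt) / (∫₀^R (1-e^{-2t})ⁿ sin²(πt/R) dt)`. -/
noncomputable def hypRayleigh (n : ℕ) (R : ℝ) : ℝ :=
  (∫ t in (0:ℝ)..R, (1 - Real.exp (-2 * t)) ^ n *
      (-((n : ℝ) / 2) * Real.sin (π * t / R) + (π / R) * Real.cos (π * t / R)) ^ 2) /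
  (∫ t in (0:ℝ)..R, (1 - Real.exp (-2 * t)) ^ n * Real.sin (π * t / R) ^ 2)

open intervalIntegral

lemma integral_comp_pi_mul_div (g : ℝ → ℝ) {R : ℝ} (hR : R ≠ 0) :
    ∫ t in (0:ℝ)..R, g (π * t / R) = R / π * ∫ x in (0:ℝ)..π, g x := by
  simp only [mul_div_right_comm π, integral_comp_mul_left g (div_ne_zero pi_ne_zero hR),
    mul_zero, div_mul_cancel₀ π hR, smul_eq_mul, inv_div]

lemma integral_sin_sq_pi_mul_div {R : ℝ} (hR : R ≠ 0) :
    ∫ t in (0:ℝ)..R, sin (π * t / R) ^ 2 = R / 2 := by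
  rw [integral_comp_pi_mul_div (sin · ^ 2) hR, integral_sin_sq]
  field_simp
  simp

lemma integral_cos_sq_pi_mul_div {R : ℝ} (hR : R ≠ 0) :
    ∫ t in (0:ℝ)..R, cos (π * t / R) ^ 2 = R / 2 := by
  rw [integral_comp_pi_mul_div (cos · ^ 2) hR, integral_cos_sq]
  field_simp
  simp

lemma integral_sin_mul_cos_pi_mul_div {R : ℝ} (hR : R ≠ 0) :
    ∫ t in (0:ℝ)..R, sin (π * t / R) * cos (π * t / R) = 0 := by
  rw [integral_comp_pi_mul_div (fun x => sin x * cos x) hR, integral_sin_mul_cos₁]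
  simp

lemma integral_exp_neg_two_mul_le (R : ℝ) : ∫ t in (0:ℝ)..R, exp (-2 * t) ≤ 1 / 2 := by
  have hderiv (t : ℝ) : HasDerivAt (fun u => -exp (-2 * u) / 2) (exp (-2 * t)) t :=
    (((hasDerivAt_id t).const_mul (-2)).exp.neg.div_const 2).congr_deriv (by simp)
  rw [integral_eq_sub_of_hasDerivAt (fun t _ => hderiv t)
    ((by fun_prop : Continuous _).intervalIntegrable 0 R)]
  have := exp_pos (-2 * R)
  simp only [mul_zero, exp_zero]
  linarith

lemma integral_mul_exp_neg_two_mul_le {R : ℝ} (hR : 0 ≤ R) :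
    ∫ t in (0:ℝ)..R, t * exp (-2 * t) ≤ 1 / 4 := by
  have hderiv (t : ℝ) :
      HasDerivAt (fun u => -(u / 2 + 1 / 4) * exp (-2 * u)) (t * exp (-2 * t)) t :=
    ((((hasDerivAt_id t).div_const 2).add_const (1 / 4)).neg.mul
      ((hasDerivAt_id t).const_mul (-2)).exp).congr_deriv (by simp; ring)
  rw [integral_eq_sub_of_hasDerivAt (fun t _ => hderiv t)
    ((by fun_prop : Continuous _).intervalIntegrable 0 R)]
  have : 0 ≤ (R / 2 + 1 / 4) * exp (-2 * R) := by positivity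
  simp only [mul_zero, exp_zero]
  linarith

lemma one_sub_pow_one_sub_le_mul (n : ℕ) {x : ℝ} (hx : x ≤ 2) :
    1 - (1 - x) ^ n ≤ n * x := by
  have := one_add_mul_le_pow (neg_le_neg hx) n
  rw [← sub_eq_add_neg] at this
  linarith

section Weight

variable (n : ℕ) {t : ℝ}

lemma one_sub_exp_neg_two_mul_pow_nonneg (ht : 0 ≤ t) : 0 ≤ (1 - exp (-2 * t)) ^ n :=
  pow_nonneg (sub_nonneg.mpr (exp_le_one_iff.mpr (by linarith))) n

lemma one_sub_exp_neg_two_mul_pow_le_one (ht : 0 ≤ t) : (1 - exp (-2 * t)) ^ n ≤ 1 :=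
  pow_le_one₀ (sub_nonneg.mpr (exp_le_one_iff.mpr (by linarith)))
    (sub_le_self 1 (exp_pos _).le)

lemma one_sub_one_sub_exp_neg_two_mul_pow_le (ht : 0 ≤ t) :
    1 - (1 - exp (-2 * t)) ^ n ≤ n * exp (-2 * t) :=
  one_sub_pow_one_sub_le_mul n ((exp_le_one_iff.mpr (by linarith)).trans one_le_two)

end Weight

section Integrals

variable (n : ℕ) {R : ℝ}

lemma sub_le_integral_weight_mul_sin_sq (hR : 0 < R) :
    R / 2 - n / 2 ≤ ∫ t in (0:ℝ)..R, (1 - exp (-2 * t)) ^ n * sin (π * t / R) ^ 2 := by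
  calc R / 2 - n / 2 ≤ ∫ t in (0:ℝ)..R, (sin (π * t / R) ^ 2 - n * exp (-2 * t)) := by
        rw [integral_sub ((by fun_prop : Continuous _).intervalIntegrable 0 R)
            ((by fun_prop : Continuous _).intervalIntegrable 0 R),
          integral_const_mul, integral_sin_sq_pi_mul_div hR.ne']
        nlinarith [integral_exp_neg_two_mul_le R, n.cast_nonneg (α := ℝ)]
    _ ≤ _ := by
      refine integral_mono_on hR.le ((by fun_prop : Continuous _).intervalIntegrable 0 R)
        ((by fun_prop : Continuous _).intervalIntegrable 0 R) fun t ht => ?_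
      have hw := one_sub_one_sub_exp_neg_two_mul_pow_le n ht.1
      have hw1 := one_sub_exp_neg_two_mul_pow_le_one n ht.1
      nlinarith [sin_sq_le_one (π * t / R)]

lemma integral_weight_mul_cos_sq_le (hR : 0 < R) :
    ∫ t in (0:ℝ)..R, (1 - exp (-2 * t)) ^ n * cos (π * t / R) ^ 2 ≤ R / 2 := by
  rw [← integral_cos_sq_pi_mul_div hR.ne']
  refine integral_mono_on hR.le ((by fun_prop : Continuous _).intervalIntegrable 0 R)
    ((by fun_prop : Continuous _).intervalIntegrable 0 R) fun t ht => ?_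
  exact mul_le_of_le_one_left (sq_nonneg _) (one_sub_exp_neg_two_mul_pow_le_one n ht.1)

lemma neg_integral_weight_mul_sin_mul_cos_le (hR : 0 < R) :
    -∫ t in (0:ℝ)..R, (1 - exp (-2 * t)) ^ n * (sin (π * t / R) * cos (π * t / R))
      ≤ n * π / (4 * R) := by
  have hpointwise (t : ℝ) (ht : t ∈ Set.Icc 0 R) :
      -((1 - exp (-2 * t)) ^ n * (sin (π * t / R) * cos (π * t / R)))
        ≤ n * π / R * (t * exp (-2 * t)) - sin (π * t / R) * cos (π * t / R) := by
    have hθ : 0 ≤ π * t / R := by have := ht.1; positivity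
    have hsin : 0 ≤ sin (π * t / R) := sin_nonneg_of_nonneg_of_le_pi hθ
      (by rw [div_le_iff₀ hR]; nlinarith [pi_pos, ht.2])
    have hφ : 0 ≤ 1 - (1 - exp (-2 * t)) ^ n :=
      sub_nonneg.mpr (one_sub_exp_neg_two_mul_pow_le_one n ht.1)
    have : (1 - (1 - exp (-2 * t)) ^ n) * sin (π * t / R) * cos (π * t / R)
        ≤ n * exp (-2 * t) * (π * t / R) :=
      calc _ ≤ (1 - (1 - exp (-2 * t)) ^ n) * sin (π * t / R) :=
            mul_le_of_le_one_right (mul_nonneg hφ hsin) (cos_le_one _)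
        _ ≤ _ := mul_le_mul (one_sub_one_sub_exp_neg_two_mul_pow_le n ht.1) (sin_le hθ) hsin
            (by positivity)
    calc _ = (1 - (1 - exp (-2 * t)) ^ n) * sin (π * t / R) * cos (π * t / R)
          - sin (π * t / R) * cos (π * t / R) := by ring
      _ ≤ _ := by
        rw [show n * π / R * (t * exp (-2 * t)) = n * exp (-2 * t) * (π * t / R) by ring]
        linarith
  rw [← integral_neg]
  calc _ ≤ ∫ t in (0:ℝ)..R, (n * π / R * (t * exp (-2 * t))
          - sin (π * t / R) * cos (π * t / R)) :=
        integral_mono_on hR.le ((by fun_prop : Continuous _).intervalIntegrable 0 R)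
          ((by fun_prop : Continuous _).intervalIntegrable 0 R) hpointwise
    _ ≤ n * π / R * (1 / 4) := by
      rw [integral_sub ((by fun_prop : Continuous _).intervalIntegrable 0 R)
          ((by fun_prop : Continuous _).intervalIntegrable 0 R),
        integral_const_mul, integral_sin_mul_cos_pi_mul_div hR.ne', sub_zero]
      exact mul_le_mul_of_nonneg_left (integral_mul_exp_neg_two_mul_le hR.le) (by positivity)
    _ = n * π / (4 * R) := by ring

end Integrals

lemma integral_weight_mul_sq_eq (n : ℕ) {R : ℝ} (hR : R ≠ 0) :
    ∫ t in (0:ℝ)..R, (1 - exp (-2 * t)) ^ n *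
      (-((n : ℝ) / 2) * sin (π * t / R) + (π / R) * cos (π * t / R)) ^ 2
    = (n : ℝ) ^ 2 / 4 * (∫ t in (0:ℝ)..R, (1 - exp (-2 * t)) ^ n * sin (π * t / R) ^ 2)
      - n * π / R * (∫ t in (0:ℝ)..R,
          (1 - exp (-2 * t)) ^ n * (sin (π * t / R) * cos (π * t / R)))
      + π ^ 2 / R ^ 2 * ∫ t in (0:ℝ)..R, (1 - exp (-2 * t)) ^ n * cos (π * t / R) ^ 2 := by
  simp only [← integral_const_mul]
  rw [← integral_sub ((by fun_prop : Continuous _).intervalIntegrable 0 R)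
      ((by fun_prop : Continuous _).intervalIntegrable 0 R),
    ← integral_add ((by fun_prop : Continuous _).intervalIntegrable 0 R)
      ((by fun_prop : Continuous _).intervalIntegrable 0 R)]
  congr 1 with t
  field_simp
  ring

theorem hypRayleigh_le (n : ℕ) {R : ℝ} (hR : 0 < R) (hRn : 2 * n ≤ R) :
    hypRayleigh n R ≤ n ^ 2 / 4 + π ^ 2 / R ^ 2 + π ^ 2 * n * (n + 2) / R ^ 3 := by
  set D := ∫ t in (0:ℝ)..R, (1 - exp (-2 * t)) ^ n * sin (π * t / R) ^ 2
  have hD := sub_le_integral_weight_mul_sin_sq n hR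
  have hD_pos : 0 < D := by linarith
  have hN : hypRayleigh n R * D
      ≤ n ^ 2 / 4 * D + (π ^ 2 / (2 * R) + n ^ 2 * π ^ 2 / (4 * R ^ 2)) := by
    rw [hypRayleigh, div_mul_cancel₀ _ hD_pos.ne', integral_weight_mul_sq_eq n hR.ne']
    have hX := mul_le_mul_of_nonneg_left (neg_integral_weight_mul_sin_mul_cos_le n hR)
      (by positivity : 0 ≤ n * π / R)
    have hY := mul_le_mul_of_nonneg_left (integral_weight_mul_cos_sq_le n hR)
      (by positivity : 0 ≤ π ^ 2 / R ^ 2)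
    have hX' : n * π / R * (n * π / (4 * R)) = n ^ 2 * π ^ 2 / (4 * R ^ 2) := by ring
    have hY' : π ^ 2 / R ^ 2 * (R / 2) = π ^ 2 / (2 * R) := by field_simp
    linarith
  have hE : π ^ 2 / (2 * R) + n ^ 2 * π ^ 2 / (4 * R ^ 2)
      ≤ (π ^ 2 / R ^ 2 + π ^ 2 * n * (n + 2) / R ^ 3) * (R / 2 - n / 2) := by
    rw [div_add_div _ _ (by positivity) (by positivity), div_le_iff₀ (by positivity)]
    field_simp
    -- times `4R³`, the right side minus the left side is `π² n (n + 2) (R - 2n)`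
    nlinarith [mul_nonneg (by positivity : (0 : ℝ) ≤ π ^ 2 * n * (n + 2))
      (by linarith : 0 ≤ R - 2 * n)]
  rw [← mul_le_mul_iff_of_pos_right hD_pos]
  calc _ ≤ _ := hN
    _ ≤ n ^ 2 / 4 * D + (π ^ 2 / R ^ 2 + π ^ 2 * n * (n + 2) / R ^ 3) * D := by
      gcongr
      exact hE.trans (by gcongr)
    _ = _ := by ring

theorem hyperbolic_ball_eigenvalue_upper_general (n : ℕ)
    (lam : ℝ → ℝ) (hlam : ∀ R : ℝ, 0 < R → lam R ≤ hypRayleigh n R) :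
    ∃ C R₀ : ℝ, 0 < C ∧ 0 < R₀ ∧ ∀ R : ℝ, R₀ ≤ R →
      hypRayleigh n R ≤ (n : ℝ) ^ 2 / 4 + π ^ 2 / R ^ 2 + C / R ^ 3 ∧
      lam R ≤ (n : ℝ) ^ 2 / 4 + π ^ 2 / R ^ 2 + C / R ^ 3 := by
  refine ⟨π ^ 2 * (n + 1) ^ 2, 2 * (n + 1), by positivity, by positivity, fun R hR₀ => ?_⟩
  have hR : 0 < R := lt_of_lt_of_le (by positivity) hR₀
  have hC : π ^ 2 * n * (n + 2) ≤ π ^ 2 * (n + 1) ^ 2 := by nlinarith [pi_pos]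
  have h := (hypRayleigh_le n hR (by linarith)).trans
    (by gcongr : _ ≤ (n : ℝ) ^ 2 / 4 + π ^ 2 / R ^ 2 + π ^ 2 * (n + 1) ^ 2 / R ^ 3)
  exact ⟨h, (hlam R hR).trans h⟩

/-- In hyperbolic space `H^{n+1}`, the Rayleigh quotient of the radial test function
`f(t) = e^{-nt/2} sin(πt/R)` on `B(p,R)` is `≤ n²/4 + π²/R² + O(R⁻³)` as `R → +∞`;
consequently, for any function `lam` (the first Dirichlet eigenvalue `λ₁(B(p,R))`) bounded
above by this Rayleigh quotient (variational principle), the same bound holds for `lam`. -/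
theorem hyperbolic_ball_eigenvalue_upper (n : ℕ) (hn : 1 ≤ n)
    (lam : ℝ → ℝ) (hlam : ∀ R : ℝ, 0 < R → lam R ≤ hypRayleigh n R) :
    ∃ C R₀ : ℝ, 0 < C ∧ 0 < R₀ ∧ ∀ R : ℝ, R₀ ≤ R →
      hypRayleigh n R ≤ (n : ℝ) ^ 2 / 4 + π ^ 2 / R ^ 2 + C / R ^ 3 ∧
      lam R ≤ (n : ℝ) ^ 2 / 4 + π ^ 2 / R ^ 2 + C / R ^ 3 :=
  hyperbolic_ball_eigenvalue_upper_general n lam hlam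
end

section
/- Let u be smooth and positive on a Riemannian manifold with Δu = (n+1)u, fix ε > 0 and a < 0, set h = sin(a·ln(εu)) and ψ = u^{−n/2}·h on the region where h > 0. Then −Δψ/ψ = n²/4 + a² + (1 − |du|²/u²)·(n(n+2)/4 − (n+1)·a·cot(a·ln(εu)) − a²). -/
/-!
With `θ = a log(εt)`, differentiating `t ^ r * g θ` gives `t ^ (r - 1) * (r g θ + a g' θ)`, a
function of the same shape. Applied twice to `F t = t ^ (-n/2) sin θ` this yields `F'` and `F''`
in closed form; the chain rule `Δ(F ∘ u) = F'(u) Δu + F''(u) |du|²` together with `Δu = (n+1) u`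
then reduces the claim to an identity between rational expressions in `u`, `sin θ`, `cos θ`.
-/

open Real Set Filter Topology

theorem hasDerivAt_const_mul_log_const_mul {a ε t : ℝ} (hε : ε ≠ 0) (ht : t ≠ 0) :
    HasDerivAt (fun s => a * log (ε * s)) (a / t) t := by
  refine ((((hasDerivAt_id t).const_mul ε).log (mul_ne_zero hε ht)).const_mul a).congr_deriv ?_
  simp only [id, mul_one]
  field_simp

theorem hasDerivAt_rpow_mul_comp_log {g : ℝ → ℝ} {g' r a ε t : ℝ} (hε : ε ≠ 0) (ht : 0 < t)
    (hg : HasDerivAt g g' (a * log (ε * t))) :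
    HasDerivAt (fun s => s ^ r * g (a * log (ε * s)))
      (t ^ (r - 1) * (r * g (a * log (ε * t)) + a * g')) t := by
  refine ((hasDerivAt_rpow_const (p := r) (Or.inl ht.ne')).mul
    (hg.comp t (hasDerivAt_const_mul_log_const_mul hε ht.ne'))).congr_deriv ?_
  rw [rpow_sub_one ht.ne', Function.comp_apply]
  field_simp

theorem contDiffOn_rpow_mul_comp_log {g : ℝ → ℝ} {k : WithTop ℕ∞} (hg : ContDiff ℝ k g)
    (r a : ℝ) {ε : ℝ} (hε : ε ≠ 0) :
    ContDiffOn ℝ k (fun s => s ^ r * g (a * log (ε * s))) (Ioi 0) := by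
  intro t (ht : 0 < t)
  have hlog : ContDiffAt ℝ k (fun s => log (ε * s)) t :=
    (contDiffAt_log.2 (mul_ne_zero hε ht.ne')).comp t (contDiffAt_const.mul contDiffAt_id)
  exact ((contDiffAt_rpow_const_of_ne ht.ne').mul
    (hg.contDiffAt.comp t (contDiffAt_const.mul hlog))).contDiffWithinAt

section SinLog

variable {r a ε t : ℝ}

theorem hasDerivAt_rpow_mul_sin_log (hε : ε ≠ 0) (ht : 0 < t) :
    HasDerivAt (fun s => s ^ r * sin (a * log (ε * s)))
      (t ^ (r - 1) * (r * sin (a * log (ε * t)) + a * cos (a * log (ε * t)))) t :=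
  hasDerivAt_rpow_mul_comp_log hε ht (hasDerivAt_sin _)

theorem hasDerivAt_deriv_rpow_mul_sin_log (hε : ε ≠ 0) (ht : 0 < t) :
    HasDerivAt (deriv fun s => s ^ r * sin (a * log (ε * s)))
      (t ^ (r - 2) * ((r - 1) * (r * sin (a * log (ε * t)) + a * cos (a * log (ε * t)))
        + a * (r * cos (a * log (ε * t)) - a * sin (a * log (ε * t))))) t := by
  have hderiv : (deriv fun s => s ^ r * sin (a * log (ε * s))) =ᶠ[𝓝 t]
      fun s => s ^ (r - 1) * (fun x => r * sin x + a * cos x) (a * log (ε * s)) := by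
    filter_upwards [Ioi_mem_nhds ht] with s hs
    exact (hasDerivAt_rpow_mul_sin_log hε hs).deriv
  have hg : HasDerivAt (fun x => r * sin x + a * cos x)
      (r * cos (a * log (ε * t)) - a * sin (a * log (ε * t))) (a * log (ε * t)) :=
    (((hasDerivAt_sin _).const_mul r).add ((hasDerivAt_cos _).const_mul a)).congr_deriv
      (by ring)
  refine ((hasDerivAt_rpow_mul_comp_log hε ht hg).congr_of_eventuallyEq hderiv).congr_deriv ?_
  rw [sub_sub, one_add_one_eq_two]

end SinLog

theorem lap_of_new_test_function_general {X : Type*} (n : ℕ)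
    (lap gradSq : (X → ℝ) → X → ℝ) (u : X → ℝ) (hu : ∀ p, 0 < u p)
    (ε a : ℝ)
    (heigen : ∀ p, lap u p = ((n : ℝ) + 1) * u p)
    (hchain : ∀ F : ℝ → ℝ, ContDiffOn ℝ 2 F (Set.Ioi 0) →
      ∀ p, lap (fun q => F (u q)) p
        = deriv F (u p) * lap u p + deriv (deriv F) (u p) * gradSq u p) :
    ∀ p, 0 < Real.sin (a * Real.log (ε * u p)) →
      -(lap (fun q => u q ^ (-(n : ℝ) / 2) * Real.sin (a * Real.log (ε * u q))) p)
          / (u p ^ (-(n : ℝ) / 2) * Real.sin (a * Real.log (ε * u p)))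
        = (n : ℝ) ^ 2 / 4 + a ^ 2
          + (1 - gradSq u p / u p ^ 2) *
            ((n : ℝ) * ((n : ℝ) + 2) / 4
              - ((n : ℝ) + 1) * a * Real.cot (a * Real.log (ε * u p)) - a ^ 2) := by
  intro p hsin
  have hε : ε ≠ 0 := by
    rintro rfl
    simp at hsin
  have hup := hu p
  rw [hchain _ (contDiffOn_rpow_mul_comp_log contDiff_sin _ a hε) p,
    (hasDerivAt_rpow_mul_sin_log hε hup).deriv, (hasDerivAt_deriv_rpow_mul_sin_log hε hup).deriv,
    heigen p, cot_eq_cos_div_sin,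
    show -(n : ℝ) / 2 - 2 = -(n : ℝ) / 2 - 1 - 1 by ring, rpow_sub_one hup.ne',
    rpow_sub_one hup.ne', rpow_sub_one hup.ne']
  generalize sin (a * log (ε * u p)) = S at hsin ⊢
  have hpow : 0 < u p ^ (-(n : ℝ) / 2) := rpow_pos_of_pos hup _
  generalize u p ^ (-(n : ℝ) / 2) = P at hpow ⊢
  field_simp
  ring

/-- Let `lap` be the Laplace–Beltrami operator and `gradSq f = |df|²_g` the squared gradient
of a Riemannian manifold, satisfying the chain rule for functions smooth on `(0,∞)`.
If `u > 0` is smooth with `Δu = (n+1)u`, `ε > 0`, `a < 0`, `h = sin(a ln(εu))` and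
`ψ = u^{-n/2} h`, then on the region where `h > 0`,
`-Δψ/ψ = n²/4 + a² + (1 - |du|²/u²)(n(n+2)/4 - (n+1) a cot(a ln(εu)) - a²)`. -/
theorem lap_of_new_test_function {X : Type*} (n : ℕ)
    (lap gradSq : (X → ℝ) → X → ℝ) (u : X → ℝ) (hu : ∀ p, 0 < u p)
    (ε a : ℝ) (hε : 0 < ε) (ha : a < 0)
    (heigen : ∀ p, lap u p = ((n : ℝ) + 1) * u p)
    (hchain : ∀ F : ℝ → ℝ, ContDiffOn ℝ 2 F (Set.Ioi 0) →
      ∀ p, lap (fun q => F (u q)) p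
        = deriv F (u p) * lap u p + deriv (deriv F) (u p) * gradSq u p) :
    ∀ p, 0 < Real.sin (a * Real.log (ε * u p)) →
      -(lap (fun q => u q ^ (-(n : ℝ) / 2) * Real.sin (a * Real.log (ε * u q))) p)
          / (u p ^ (-(n : ℝ) / 2) * Real.sin (a * Real.log (ε * u p)))
        = (n : ℝ) ^ 2 / 4 + a ^ 2
          + (1 - gradSq u p / u p ^ 2) *
            ((n : ℝ) * ((n : ℝ) + 2) / 4
              - ((n : ℝ) + 1) * a * Real.cot (a * Real.log (ε * u p)) - a ^ 2) :=
  lap_of_new_test_function_general n lap gradSq u hu ε a heigen hchain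
end

section
/- For every natural n ≥ 1, the alternating sum S_n = ∑_{k=1}^n C(n,k)·(−1)^{k+1}/k³ is positive. -/
open Finset

/-! Write `T m n` (`altBinomialSum m n`) for the sum with `k ^ m` in place of `k ^ 3`. Pascal's
rule and the absorption identity `(n + 1) C(n, j) = (j + 1) C(n + 1, j + 1)` give
`T (m + 1) (n + 1) = T (m + 1) n + T m (n + 1) / (n + 1)`, while `T 0 (n + 1) = 1` because the
full alternating binomial sum vanishes. Positivity follows by induction on `m` and then `n`; in
fact `T m n` is the complete homogeneous symmetric polynomial of degree `m` in `1, 1/2, …, 1/n`. -/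

noncomputable def altBinomialSum (m n : ℕ) : ℝ :=
  ∑ k ∈ Icc 1 n, (n.choose k : ℝ) * (-1) ^ (k + 1) / (k : ℝ) ^ m

theorem choose_succ_succ_div_pow_succ {K : Type*} [Field K] [CharZero K] (m n j : ℕ) :
    ((n + 1).choose (j + 1) : K) / ((j : K) + 1) ^ (m + 1) =
      (n.choose (j + 1) : K) / ((j : K) + 1) ^ (m + 1) +
        ((n + 1).choose (j + 1) : K) / ((j : K) + 1) ^ m / ((n : K) + 1) := by
  have absorption : ((n + 1).choose (j + 1) : K) / ((j : K) + 1) ^ m / ((n : K) + 1) =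
      n.choose j / ((j : K) + 1) ^ (m + 1) := by
    have hcast : ((n + 1).choose (j + 1) : K) * (j + 1) = (n + 1) * n.choose j := by
      exact_mod_cast (Nat.add_one_mul_choose_eq n j).symm
    have hj := Nat.cast_add_one_ne_zero (R := K) j
    have hn := Nat.cast_add_one_ne_zero (R := K) n
    field_simp
    linear_combination ((j : K) + 1) ^ m * hcast
  rw [absorption, Nat.choose_succ_succ', Nat.cast_add, add_div, add_comm]

theorem altBinomialSum_zero_succ (n : ℕ) : altBinomialSum 0 (n + 1) = 1 := by
  have h : ∑ k ∈ range (n + 1 + 1), ((-1) ^ k * (n + 1).choose k : ℝ) = 0 := by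
    exact_mod_cast Int.alternating_sum_range_choose_of_ne (n := n + 1) (by omega)
  rw [range_eq_Ico, sum_eq_sum_Ico_succ_bot (by omega), zero_add, Ico_add_one_right_eq_Icc] at h
  simp only [altBinomialSum, pow_zero, div_one, pow_succ, mul_neg, sum_neg_distrib,
    neg_eq_iff_eq_neg]
  simpa [add_eq_zero_iff_eq_neg', mul_comm] using h

theorem altBinomialSum_succ_succ (m n : ℕ) :
    altBinomialSum (m + 1) (n + 1) =
      altBinomialSum (m + 1) n + altBinomialSum m (n + 1) / ((n : ℝ) + 1) := by
  have extend : altBinomialSum (m + 1) n =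
      ∑ k ∈ Icc 1 (n + 1), (n.choose k : ℝ) * (-1) ^ (k + 1) / (k : ℝ) ^ (m + 1) := by
    rw [sum_Icc_succ_top (by omega), Nat.choose_succ_self, Nat.cast_zero, zero_mul, zero_div,
      add_zero, altBinomialSum]
  rw [extend, altBinomialSum, altBinomialSum, sum_div, ← sum_add_distrib]
  refine sum_congr rfl fun k hk => ?_
  obtain ⟨j, rfl⟩ : ∃ j, k = j + 1 := ⟨k - 1, by grind⟩
  push_cast
  linear_combination (-1 : ℝ) ^ (j + 1 + 1) * choose_succ_succ_div_pow_succ (K := ℝ) m n j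

theorem altBinomialSum_succ_pos (m n : ℕ) : 0 < altBinomialSum m (n + 1) := by
  induction m generalizing n with
  | zero => rw [altBinomialSum_zero_succ]; exact one_pos
  | succ m ihm =>
    induction n with
    | zero => simp [altBinomialSum]
    | succ n ihn =>
      rw [altBinomialSum_succ_succ]
      have := ihm (n + 1)
      positivity

/-- For every `n ≥ 1`, the alternating sum `∑_{k=1}^n C(n,k) (-1)^{k+1} / k³` is positive. -/
theorem alternating_binomial_sum_pos (n : ℕ) (hn : 1 ≤ n) :
    0 < ∑ k ∈ Finset.Icc 1 n, (n.choose k : ℝ) * (-1) ^ (k + 1) / (k : ℝ) ^ 3 := by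
  obtain ⟨n, rfl⟩ := Nat.exists_eq_add_of_le' hn
  exact altBinomialSum_succ_pos 3 n
end
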